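/- Let n be a natural number and let (H^i)_{i ∈ ℤ} be a family of finite-dimensional real vector spaces with H^i = 0 for i < 0 and for i > 2n, together with linear maps L_i : H^i → H^{i+2} satisfying the hard Lefschetz condition: for every p with 0 ≤ p ≤ n, the p-fold composite L_{n+p-2} ∘ ⋯ ∘ L_{n-p} : H^{n-p} → H^{n+p} is a linear isomorphism. Assume moreover that dim H^i is even for every odd i. Let (E^p)_{p ∈ ℤ} be finite-dimensional real vector spaces together with linear maps π_p : H^p → E^p and δ_p : E^p → H^{p-1} such that for every p the sequence H^{p-2} →(L_{p-2}) H^p →(π_p) E^p →(δ_p) H^{p-1} →(L_{p-1}) H^{p+1} is exact at H^p, at E^p, and at H^{p-1}. Then for every odd p with 1 ≤ p ≤ n, the dimension of E^p is even. -/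
import Mathlib


/-- Cast between members of a ℤ-indexed family of real vector spaces
along an equality of indices. -/
def castE {H : ℤ → Type*} [∀ i, AddCommGroup (H i)] [∀ i, Module ℝ (H i)]
    {i j : ℤ} (h : i = j) : H i ≃ₗ[ℝ] H j :=
  h ▸ LinearEquiv.refl ℝ (H i)

/-- The `p`-fold composite `L_{i+2(p-1)} ∘ ⋯ ∘ L_{i+2} ∘ L_i : H^i → H^{i+2p}`
of a degree-two operator `L`. -/
def iterL {H : ℤ → Type*} [∀ i, AddCommGroup (H i)] [∀ i, Module ℝ (H i)]
    (L : ∀ i : ℤ, H i →ₗ[ℝ] H (i + 2)) :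
    (p : ℕ) → (i : ℤ) → (H i →ₗ[ℝ] H (i + 2 * p))
  | 0, i => (castE (show i = i + 2 * (0 : ℕ) by simp)).toLinearMap
  | (p + 1), i =>
      (castE (show i + 2 + 2 * p = i + 2 * ((p : ℕ) + 1 : ℕ) by push_cast; ring)).toLinearMap
        ∘ₗ (iterL L p (i + 2)) ∘ₗ (L i)

/-- Abstract Gysin-sequence lemma: let `(H^i)` be a ℤ-graded family of
finite-dimensional real vector spaces vanishing outside degrees `0,…,2n`,
equipped with a degree-two operator `L` satisfying the hard Lefschetz
condition in dimension `2n`, and with `dim H^i` even in every odd degree `i`.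
If `(E^p)` fits into sequences
`H^{p-2} →L H^p →π E^p →δ H^{p-1} →L H^{p+1}`
exact at `H^p`, at `E^p` and at `H^{p-1}`, then `dim E^p` is even for every
odd `p` with `1 ≤ p ≤ n`. -/
theorem gysin_even_dim
    {H : ℤ → Type*} [∀ i, AddCommGroup (H i)] [∀ i, Module ℝ (H i)]
    [∀ i, FiniteDimensional ℝ (H i)]
    {E : ℤ → Type*} [∀ p, AddCommGroup (E p)] [∀ p, Module ℝ (E p)]
    [∀ p, FiniteDimensional ℝ (E p)]
    (n : ℕ)
    (hlow : ∀ i : ℤ, i < 0 → Subsingleton (H i))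
    (hhigh : ∀ i : ℤ, 2 * (n : ℤ) < i → Subsingleton (H i))
    (L : ∀ i : ℤ, H i →ₗ[ℝ] H (i + 2))
    (hard : ∀ p : ℕ, p ≤ n →
      Function.Bijective
        ((castE (show ((n : ℤ) - p) + 2 * p = (n : ℤ) + p by ring)).toLinearMap ∘ₗ
          iterL L p ((n : ℤ) - p)))
    (hHeven : ∀ i : ℤ, Odd i → Even (Module.finrank ℝ (H i)))
    (π : ∀ p : ℤ, H p →ₗ[ℝ] E p)
    (δ : ∀ p : ℤ, E p →ₗ[ℝ] H (p - 1))
    (exact₁ : ∀ p : ℤ,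
      LinearMap.range
        ((castE (show p - 2 + 2 = p by ring)).toLinearMap ∘ₗ L (p - 2)) =
        LinearMap.ker (π p))
    (exact₂ : ∀ p : ℤ, LinearMap.range (π p) = LinearMap.ker (δ p))
    (exact₃ : ∀ p : ℤ, LinearMap.range (δ p) = LinearMap.ker (L (p - 1))) :
    ∀ p : ℤ, Odd p → 1 ≤ p → p ≤ (n : ℤ) → Even (Module.finrank ℝ (E p)) := by

  intro p hodd h1 hn
  obtain ⟨k, hk⟩ := hodd
  -- injectivity of L i for 0 ≤ i < n
  have injL : ∀ i : ℤ, 0 ≤ i → i < (n : ℤ) → Function.Injective (L i) := by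
    intro i h0 hlt
    have hq0 : (0:ℤ) ≤ (n:ℤ) - i := by omega
    obtain ⟨q, hq⟩ : ∃ q : ℕ, (n:ℤ) - (q:ℤ) = i := ⟨((n:ℤ) - i).toNat, by omega⟩
    have hq1 : 1 ≤ q := by omega
    have hqn : q ≤ n := by omega
    subst hq
    obtain ⟨q', rfl⟩ : ∃ q', q = q' + 1 := ⟨q - 1, by omega⟩
    have hb := hard (q' + 1) hqn
    intro x y hxy
    apply hb.injective
    simp only [LinearMap.coe_comp, Function.comp_apply, iterL]
    rw [hxy]
  have hLinj : Function.Injective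
      ((castE (show p - 2 + 2 = p by ring)).toLinearMap ∘ₗ L (p - 2)) := by
    rcases eq_or_lt_of_le h1 with h | h
    · have : Subsingleton (H (p - 2)) := hlow (p - 2) (by omega)
      exact Function.injective_of_subsingleton _
    · simp only [LinearMap.coe_comp, LinearEquiv.coe_coe]
      exact (castE _).injective.comp (injL (p - 2) (by omega) (by omega))
  have hdp : ∀ x : E p, δ p x = 0 := by
    intro x
    have hmem : δ p x ∈ LinearMap.ker (L (p - 1)) := by
      rw [← exact₃ p]; exact ⟨x, rfl⟩
    have hinj := injL (p - 1) (by omega) (by omega)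
    rw [LinearMap.ker_eq_bot.mpr hinj] at hmem
    simpa using hmem
  have hπsurj : LinearMap.range (π p) = ⊤ := by
    rw [exact₂ p]
    ext x
    simp [LinearMap.mem_ker, hdp x]
  have hrank := LinearMap.finrank_range_add_finrank_ker (π p)
  rw [hπsurj, finrank_top] at hrank
  have hkerrank : Module.finrank ℝ (LinearMap.ker (π p)) = Module.finrank ℝ (H (p - 2)) := by
    rw [← exact₁ p]
    exact LinearMap.finrank_range_of_inj hLinj
  rw [hkerrank] at hrank
  have hHp := hHeven p ⟨k, hk⟩
  have hHp2 := hHeven (p - 2) ⟨k - 1, by omega⟩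
  rw [← hrank] at hHp
  exact (Nat.even_add.mp hHp).mpr hHp2
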